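/- arXiv:2111.06282 — 2 statements merged into one kernel-verified Lean document; each statement's English description precedes it below -/
import Mathlib

section
/- Let R, S ⊆ I × I and k, l, m, n ∈ I such that the k-th row of R is exactly {l} (i.e., (k,j) ∈ R ⟺ j = l), (n,l) ∈ R, (k,m) ∈ S, and (n,m) ∉ S. Then the equation R∘X = S has no solution. -/
open Classical

noncomputable def incid {I : Type*} (R : Set (I × I)) : I → I → Bool :=
  fun i j => if (i, j) ∈ R then true else false

def rcomp {I : Type*} (R S : Set (I × I)) : Set (I × I) :=
  {p | ∃ k, (p.1, k) ∈ R ∧ (k, p.2) ∈ S}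

noncomputable def mprod {I : Type*} (A B : I → I → Bool) : I → I → Bool :=
  fun i j => ⨆ k, A i k * B k j

theorem stmt10 {I : Type*} (R S : Set (I × I)) (k l m n : I)
    (h1 : ∀ j, (k, j) ∈ R ↔ j = l)
    (h2 : (n, l) ∈ R) (h3 : (k, m) ∈ S) (h4 : (n, m) ∉ S) :
    ¬ ∃ X : Set (I × I), rcomp R X = S := by
  rintro ⟨X, hX⟩
  have hkm : (k, m) ∈ rcomp R X := hX ▸ h3
  obtain ⟨p, hp1, hp2⟩ := hkm
  rw [h1] at hp1
  subst hp1
  exact h4 (hX ▸ ⟨p, h2, hp2⟩)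
end

section
/- Let R, S ⊆ I × I, and for i, k ∈ I define A_i = {j : (i,j) ∈ R}, B_k = {i : (i,k) ∉ S}, and C_k = ⋃_{l∈B_k} A_l. Then the equation R∘X = S is solvable if and only if A_i \ C_k ≠ ∅ for all k ∈ I and all i ∉ B_k. -/
open Classical

theorem stmt17 {I : Type*} (R S : Set (I × I)) :
    (∃ X : Set (I × I), rcomp R X = S) ↔
      ∀ k i, (i, k) ∈ S →
        ({j | (i, j) ∈ R} \ ⋃ l ∈ {i' | (i', k) ∉ S}, {j | (l, j) ∈ R}).Nonempty := by
  constructor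
  · rintro ⟨X, hX⟩ k i hik
    rw [← hX] at hik
    obtain ⟨j, hij, hjk⟩ := hik
    refine ⟨j, hij, ?_⟩
    simp only [Set.mem_iUnion, Set.mem_setOf_eq, not_exists]
    rintro l hl hlj
    exact hl (hX ▸ ⟨j, hlj, hjk⟩)
  · intro h
    refine ⟨{p | ∀ l, (l, p.1) ∈ R → (l, p.2) ∈ S}, ?_⟩
    ext ⟨i, k⟩
    constructor
    · rintro ⟨j, hij, hjk⟩
      exact hjk i hij
    · intro hik
      obtain ⟨j, hij, hj⟩ := h k i hik
      refine ⟨j, hij, fun l hlj => ?_⟩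
      by_contra hlk
      exact hj (Set.mem_biUnion hlk hlj)
end
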